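/- arXiv:1103.5510 — 6 statements merged into one kernel-verified Lean document; each statement's English description precedes it below -/
import Mathlib

section
/- Let r be a real number with r > 3, and let i, j, k, a, b, c be natural numbers. Then (i ≤ a and j ≤ b and k ≤ c) holds if and only if r^i / r^a + r^j / r^b + r^k / r^c ≤ 3. (This is the correctness of the paper's reduction from 3-d dominance to halfspace range searching: the point p = (i,j,k) is dominated by q = (a,b,c) iff the transformed point p* = (r^i, r^j, r^k) lies in the transformed halfspace q* = {(x,y,z) : x/r^a + y/r^b + z/r^c ≤ 3}.) -/
/-- Correctness of the reduction from 3-d dominance to halfspace range searching: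
`(i,j,k)` is dominated by `(a,b,c)` iff the transformed point `(r^i, r^j, r^k)` lies
in the halfspace `{(x,y,z) : x/r^a + y/r^b + z/r^c ≤ 3}`. -/
theorem dominance_iff_halfspace (r : ℝ) (hr : 3 < r) (i j k a b c : ℕ) :
    (i ≤ a ∧ j ≤ b ∧ k ≤ c) ↔
      r ^ i / r ^ a + r ^ j / r ^ b + r ^ k / r ^ c ≤ 3 := by
  have hr0 : (0:ℝ) < r := by linarith
  have hr1 : (1:ℝ) ≤ r := by linarith
  have hpos : ∀ n : ℕ, (0:ℝ) < r ^ n := fun n => pow_pos hr0 n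
  have hle : ∀ m n : ℕ, m ≤ n → r ^ m / r ^ n ≤ 1 := by
    intro m n h
    rw [div_le_one (hpos n)]
    exact pow_le_pow_right₀ hr1 h
  have hbig : ∀ m n : ℕ, n < m → 3 < r ^ m / r ^ n := by
    intro m n h
    rw [lt_div_iff₀ (hpos n)]
    calc 3 * r ^ n < r * r ^ n := by nlinarith [hpos n]
      _ = r ^ (n + 1) := (pow_succ' r n).symm
      _ ≤ r ^ m := pow_le_pow_right₀ hr1 h
  constructor
  · rintro ⟨h1, h2, h3⟩
    linarith [hle i a h1, hle j b h2, hle k c h3]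
  · intro h
    by_contra hc
    push_neg at hc
    rcases Nat.lt_or_ge a i with h1 | h1
    · linarith [hbig i a h1, div_pos (hpos j) (hpos b), div_pos (hpos k) (hpos c)]
    rcases Nat.lt_or_ge b j with h2 | h2
    · linarith [hbig j b h2, div_pos (hpos i) (hpos a), div_pos (hpos k) (hpos c)]
    have h3 := hc h1 h2
    linarith [hbig k c h3, div_pos (hpos i) (hpos a), div_pos (hpos j) (hpos b)]
end

section
/- Let r be a real number with r > 3, and let A and B be finite sets of triples of natural numbers (the red and blue points). For each p = (i,j,k) ∈ A let p* = (r^i, r^j, r^k) ∈ ℝ³, and for each q = (a,b,c) ∈ B let H_q = {(x,y,z) ∈ ℝ³ : x/r^a + y/r^b + z/r^c > 3} (the complement of the transformed blue halfspace, an open halfspace). Then there is NO pair (p,q) with p ∈ A, q ∈ B and p dominated by q (componentwise ≤) if and only if the convex hull (over ℝ) of the set {p* : p ∈ A} is contained in the intersection ⋂_{q ∈ B} H_q. -/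
lemma key_term (r : ℝ) (hr : 3 < r) {a i : ℕ} (h : a < i) : r ≤ r ^ i / r ^ a := by
  have hr0 : (0:ℝ) < r := by linarith
  rw [le_div_iff₀ (pow_pos hr0 a)]
  calc r * r ^ a = r ^ (a + 1) := by ring
  _ ≤ r ^ i := pow_le_pow_right₀ (by linarith) h

lemma key_iff (r : ℝ) (hr : 3 < r) (i j k a b c : ℕ) :
    (3 < r ^ i / r ^ a + r ^ j / r ^ b + r ^ k / r ^ c) ↔ ¬ (i ≤ a ∧ j ≤ b ∧ k ≤ c) := by
  have hr0 : (0:ℝ) < r := by linarith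
  constructor
  · rintro h ⟨h1, h2, h3⟩
    have t1 : r ^ i / r ^ a ≤ 1 := by
      rw [div_le_one (pow_pos hr0 a)]
      exact pow_le_pow_right₀ (by linarith) h1
    have t2 : r ^ j / r ^ b ≤ 1 := by
      rw [div_le_one (pow_pos hr0 b)]
      exact pow_le_pow_right₀ (by linarith) h2
    have t3 : r ^ k / r ^ c ≤ 1 := by
      rw [div_le_one (pow_pos hr0 c)]
      exact pow_le_pow_right₀ (by linarith) h3
    linarith
  · intro h
    have p1 : 0 < r ^ i / r ^ a := div_pos (pow_pos hr0 i) (pow_pos hr0 a)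
    have p2 : 0 < r ^ j / r ^ b := div_pos (pow_pos hr0 j) (pow_pos hr0 b)
    have p3 : 0 < r ^ k / r ^ c := div_pos (pow_pos hr0 k) (pow_pos hr0 c)
    push_neg at h
    rcases le_or_gt i a with h1 | h1
    · rcases le_or_gt j b with h2 | h2
      · have h3 := h h1 h2
        have := key_term r hr h3
        linarith
      · have := key_term r hr h2
        linarith
    · have := key_term r hr h1
      linarith

/-- No red point of `A` is dominated by a blue point of `B` iff the convex hull of the
transformed red points is contained in the intersection of the complements of the
transformed blue halfspaces. -/
theorem no_dominated_pair_iff_hull_subset (r : ℝ) (hr : 3 < r)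
    (A B : Finset (ℕ × ℕ × ℕ)) :
    (¬ ∃ p ∈ A, ∃ q ∈ B, p.1 ≤ q.1 ∧ p.2.1 ≤ q.2.1 ∧ p.2.2 ≤ q.2.2) ↔
      convexHull ℝ
          ((fun p : ℕ × ℕ × ℕ => ((r ^ p.1, r ^ p.2.1, r ^ p.2.2) : ℝ × ℝ × ℝ)) '' ↑A)
        ⊆ ⋂ q ∈ B, {v : ℝ × ℝ × ℝ |
            3 < v.1 / r ^ q.1 + v.2.1 / r ^ q.2.1 + v.2.2 / r ^ q.2.2} := by
  have hconv : Convex ℝ (⋂ q ∈ B, {v : ℝ × ℝ × ℝ |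
      3 < v.1 / r ^ q.1 + v.2.1 / r ^ q.2.1 + v.2.2 / r ^ q.2.2}) := by
    apply convex_iInter; intro q; apply convex_iInter; intro _
    have hlin : IsLinearMap ℝ (fun v : ℝ × ℝ × ℝ =>
        v.1 / r ^ q.1 + v.2.1 / r ^ q.2.1 + v.2.2 / r ^ q.2.2) := by
      constructor
      · intro x y
        simp only [Prod.fst_add, Prod.snd_add]
        ring
      · intro c x
        simp only [Prod.smul_fst, Prod.smul_snd, smul_eq_mul]
        ring
    exact convex_halfSpace_gt hlin 3
  constructor
  · intro h
    apply convexHull_min _ hconv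
    rintro _ ⟨p, hp, rfl⟩
    simp only [Set.mem_iInter]
    intro q hq
    rw [Set.mem_setOf_eq, key_iff r hr]
    intro hdom
    exact h ⟨p, hp, q, hq, hdom⟩
  · rintro h ⟨p, hp, q, hq, hdom⟩
    have hmem : (fun p : ℕ × ℕ × ℕ => ((r ^ p.1, r ^ p.2.1, r ^ p.2.2) : ℝ × ℝ × ℝ)) p ∈
        convexHull ℝ ((fun p : ℕ × ℕ × ℕ => ((r ^ p.1, r ^ p.2.1, r ^ p.2.2) : ℝ × ℝ × ℝ)) '' ↑A) :=
      subset_convexHull ℝ _ ⟨p, hp, rfl⟩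
    have := h hmem
    simp only [Set.mem_iInter] at this
    have h3 := this q hq
    rw [Set.mem_setOf_eq, key_iff r hr] at h3
    exact h3 hdom
end

section
/- Let B and m be natural numbers with B ≥ 2 and m ≥ 1. Then Σ_{j=1}^{m} B^{v_B(j)} ≤ m · (log_B m + 1), where log_B m denotes the floor of the base-B logarithm of m (Nat.log B m). (This is the pointer-cost bound for the second skip-list strategy in the ball-inheritance structure: a node at level i has cost B^i, the number of positions j ≤ m at level i is at most m/B^i, so the total cost over all positions is O(m log_B m).) -/
/-- Pointer-cost bound for the second skip-list strategy in the ball-inheritance structure: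
`Σ_{j=1}^{m} B^{v_B(j)} ≤ m · (⌊log_B m⌋ + 1)`. -/
theorem skip_list_cost_le (B m : ℕ) (hB : 2 ≤ B) (hm : 1 ≤ m) :
    ∑ j ∈ Finset.Icc 1 m, B ^ padicValNat B j ≤ m * (Nat.log B m + 1) := by
  set L := Nat.log B m with hL
  have hB1 : 1 < B := hB
  have hvle : ∀ j ∈ Finset.Icc 1 m, padicValNat B j ≤ L := by
    intro j hj
    rw [Finset.mem_Icc] at hj
    have hj0 : j ≠ 0 := by omega
    have hdvd : B ^ padicValNat B j ∣ j := pow_padicValNat_dvd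
    have hle : B ^ padicValNat B j ≤ m :=
      le_trans (Nat.le_of_dvd (by omega) hdvd) hj.2
    exact (Nat.le_log_iff_pow_le hB1 (by omega)).mpr hle
  have step1 : ∑ j ∈ Finset.Icc 1 m, B ^ padicValNat B j
      = ∑ j ∈ Finset.Icc 1 m, ∑ i ∈ Finset.range (L + 1),
          if padicValNat B j = i then B ^ i else 0 := by
    apply Finset.sum_congr rfl
    intro j hj
    rw [Finset.sum_ite_eq (Finset.range (L + 1)) (padicValNat B j) (fun i => B ^ i)]
    simp [Nat.lt_succ_iff.mpr (hvle j hj)]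
  rw [step1, Finset.sum_comm]
  have step2 : ∀ i ∈ Finset.range (L + 1),
      (∑ j ∈ Finset.Icc 1 m, if padicValNat B j = i then B ^ i else 0) ≤ m := by
    intro i _
    rw [← Finset.sum_filter, Finset.sum_const, smul_eq_mul]
    have hsub : (Finset.Icc 1 m).filter (fun j => padicValNat B j = i)
        ⊆ (Finset.Ioc 0 m).filter (fun j => B ^ i ∣ j) := by
      intro j hj
      rw [Finset.mem_filter, Finset.mem_Icc] at hj
      rw [Finset.mem_filter, Finset.mem_Ioc]
      refine ⟨⟨by omega, hj.1.2⟩, ?_⟩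
      have := pow_padicValNat_dvd (p := B) (n := j)
      rwa [hj.2] at this
    have hcard : ((Finset.Icc 1 m).filter (fun j => padicValNat B j = i)).card
        ≤ m / B ^ i := by
      calc _ ≤ ((Finset.Ioc 0 m).filter (fun j => B ^ i ∣ j)).card :=
            Finset.card_le_card hsub
        _ = m / B ^ i := Nat.Ioc_filter_dvd_card_eq_div m (B ^ i)
    calc _ ≤ (m / B ^ i) * B ^ i := Nat.mul_le_mul_right _ hcard
      _ ≤ m := Nat.div_mul_le_self m (B ^ i)
  calc ∑ i ∈ Finset.range (L + 1),
        ∑ j ∈ Finset.Icc 1 m, (if padicValNat B j = i then B ^ i else 0)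
      ≤ ∑ _i ∈ Finset.range (L + 1), m := Finset.sum_le_sum step2
    _ = m * (L + 1) := by rw [Finset.sum_const, Finset.card_range, smul_eq_mul, mul_comm]
end

section
/- Let B and m be natural numbers with B ≥ 2 and m ≥ 1, and define f : ℕ → ℕ by f(j) = min(m, j + B^{v_B(j)}) for j ≥ 1 (and f(0) = 0, say). Then for every j with 1 ≤ j ≤ m, iterating f at most B · (log_B m + 1) times starting from j yields exactly m, where log_B m denotes Nat.log B m. (This is the traversal-time bound for the second skip-list strategy: from any node one reaches the tail in O(B log_B m) pointer traversals, since at most B nodes are visited on each level before reaching a node on a higher level.) -/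
private lemma skl_not_pow_succ_dvd {B j : ℕ} (hB : 2 ≤ B) (hj : j ≠ 0) :
    ¬ B ^ (padicValNat B j + 1) ∣ j := by
  rw [padicValNat_def' (by omega : B ≠ 1) hj]
  exact (Nat.finiteMultiplicity_iff.2 ⟨by omega, Nat.pos_of_ne_zero hj⟩).not_pow_dvd_of_multiplicity_lt (by omega)

private lemma skl_le_padicValNat {B j k : ℕ} (hB : 2 ≤ B) (hj : j ≠ 0) (h : B ^ k ∣ j) :
    k ≤ padicValNat B j := by
  rw [padicValNat_def' (by omega : B ≠ 1) hj]
  exact (Nat.finiteMultiplicity_iff.2 ⟨by omega, Nat.pos_of_ne_zero hj⟩).le_multiplicity_of_pow_dvd h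

/-- the digit at level `padicValNat B j` is nonzero -/
private lemma skl_digit_pos {B j : ℕ} (hB : 2 ≤ B) (hj : j ≠ 0) :
    ¬ B ∣ j / B ^ padicValNat B j := by
  intro h
  rw [Nat.dvd_div_iff_mul_dvd pow_padicValNat_dvd] at h
  exact skl_not_pow_succ_dvd hB hj (by rwa [pow_succ])

/-- potential function: bound on the number of remaining traversal steps -/
private def sklG (B L j : ℕ) : ℕ :=
  (B - j / B ^ padicValNat B j % B) + (B - 1) * (L - padicValNat B j)

/-- Traversal-time bound for the second skip-list strategy: from any position `j` one
reaches the tail `m` in at most `B · (⌊log_B m⌋ + 1)` pointer traversals. -/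
theorem skip_list_traversal (B m : ℕ) (hB : 2 ≤ B) (hm : 1 ≤ m) (f : ℕ → ℕ)
    (hf : ∀ j, 1 ≤ j → f j = min m (j + B ^ padicValNat B j)) :
    ∀ j, 1 ≤ j → j ≤ m → f^[B * (Nat.log B m + 1)] j = m := by
  have hfm : f m = m := by rw [hf m hm]; exact Nat.min_eq_left (Nat.le_add_right _ _)
  have hiter : ∀ n, f^[n] m = m := fun n => Function.iterate_fixed hfm n
  have h1B : (1 : ℕ) % B = 1 := Nat.mod_eq_of_lt (by omega)
  -- level bound
  have hlev : ∀ j, 1 ≤ j → j ≤ m → padicValNat B j ≤ Nat.log B m := by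
    intro j hj1 hjm
    have hd : B ^ padicValNat B j ∣ j := pow_padicValNat_dvd
    have : B ^ padicValNat B j ≤ m := le_trans (Nat.le_of_dvd (by omega) hd) hjm
    exact (Nat.le_log_iff_pow_le (by omega) (by omega)).2 this
  -- digit bounds
  have hdig : ∀ j, 1 ≤ j → 1 ≤ j / B ^ padicValNat B j % B ∧ j / B ^ padicValNat B j % B ≤ B - 1 := by
    intro j hj1
    constructor
    · rcases Nat.eq_zero_or_pos (j / B ^ padicValNat B j % B) with h | h
      · exact absurd (Nat.dvd_of_mod_eq_zero h) (skl_digit_pos hB (by omega))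
      · exact h
    · have := Nat.mod_lt (j / B ^ padicValNat B j) (show 0 < B by omega); omega
  -- main induction
  have main : ∀ n j, 1 ≤ j → j ≤ m → sklG B (Nat.log B m) j ≤ n → f^[n] j = m := by
    intro n
    induction n with
    | zero =>
      intro j hj1 hjm hgj
      have := (hdig j hj1).2
      simp only [sklG] at hgj
      omega
    | succ n ih =>
      intro j hj1 hjm hgj
      rw [Function.iterate_succ_apply]
      by_cases hfj : f j = m
      · rw [hfj]; exact hiter n
      -- f j = j + B ^ v j < m
      have hfj' : f j = j + B ^ padicValNat B j ∧ j + B ^ padicValNat B j < m := by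
        rw [hf j hj1] at hfj ⊢
        rcases Nat.lt_or_ge (j + B ^ padicValNat B j) m with h | h
        · exact ⟨Nat.min_eq_right h.le, h⟩
        · exact absurd (Nat.min_eq_left h) hfj
      obtain ⟨hfe, hflt⟩ := hfj'
      have hBpos : 0 < B ^ padicValNat B j := Nat.pow_pos (by omega)
      have hj'1 : 1 ≤ j + B ^ padicValNat B j := by omega
      have hj'm : j + B ^ padicValNat B j ≤ m := hflt.le
      have hdvd : B ^ padicValNat B j ∣ j + B ^ padicValNat B j :=
        Nat.dvd_add pow_padicValNat_dvd dvd_rfl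
      have hlev' : padicValNat B j ≤ padicValNat B (j + B ^ padicValNat B j) :=
        skl_le_padicValNat hB (by omega) hdvd
      have hℓL : padicValNat B j ≤ Nat.log B m := hlev j hj1 hjm
      have hℓ'L : padicValNat B (j + B ^ padicValNat B j) ≤ Nat.log B m := hlev _ hj'1 hj'm
      have hc := hdig j hj1
      have hc' := hdig _ hj'1
      -- show the potential decreases
      have hdec : sklG B (Nat.log B m) (j + B ^ padicValNat B j) < sklG B (Nat.log B m) j := by
        rcases Nat.eq_or_lt_of_le hlev' with heq | hlt
        · -- same level: digit increments
          have hqs : (j + B ^ padicValNat B j) / B ^ padicValNat B j = j / B ^ padicValNat B j + 1 :=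
            Nat.add_div_right _ hBpos
          rw [← heq, hqs] at hc'
          have hmod := Nat.add_mod (j / B ^ padicValNat B j) 1 B
          rw [h1B] at hmod
          have hlt' : j / B ^ padicValNat B j % B + 1 < B := by
            rcases Nat.lt_or_ge (j / B ^ padicValNat B j % B + 1) B with h | h
            · exact h
            · exfalso
              have heq1 : j / B ^ padicValNat B j % B = B - 1 := by omega
              have h0 : (j / B ^ padicValNat B j + 1) % B = 0 := by
                rw [hmod, heq1, Nat.sub_add_cancel (by omega), Nat.mod_self]
              omega
          have hcc : (j / B ^ padicValNat B j + 1) % B = j / B ^ padicValNat B j % B + 1 := by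
            rw [hmod]; exact Nat.mod_eq_of_lt hlt'
          simp only [sklG]
          rw [← heq, hqs, hcc]
          omega
        · -- higher level
          have hmul : (B - 1) * (Nat.log B m - padicValNat B (j + B ^ padicValNat B j)) + (B - 1)
              ≤ (B - 1) * (Nat.log B m - padicValNat B j) := by
            have hle : (Nat.log B m - padicValNat B (j + B ^ padicValNat B j)) + 1
                ≤ Nat.log B m - padicValNat B j := by omega
            calc (B - 1) * (Nat.log B m - padicValNat B (j + B ^ padicValNat B j)) + (B - 1)
                = (B - 1) * ((Nat.log B m - padicValNat B (j + B ^ padicValNat B j)) + 1) := by ring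
              _ ≤ (B - 1) * (Nat.log B m - padicValNat B j) := Nat.mul_le_mul_left _ hle
          simp only [sklG]
          omega
      rw [hfe]
      exact ih _ hj'1 hj'm (by omega)
  intro j hj1 hjm
  apply main _ j hj1 hjm
  have hc := hdig j hj1
  have hℓL : padicValNat B j ≤ Nat.log B m := hlev j hj1 hjm
  have h1 : (B - 1) * (Nat.log B m - padicValNat B j) ≤ (B - 1) * Nat.log B m :=
    Nat.mul_le_mul_left _ (by omega)
  have h2 : (B - 1) * Nat.log B m ≤ B * Nat.log B m := Nat.mul_le_mul_right _ (by omega)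
  have h3 : B * (Nat.log B m + 1) = B * Nat.log B m + B := by ring
  simp only [sklG]
  omega
end

section
/- Let B and m be natural numbers with B ≥ 2 and m ≥ 1, and define g : ℕ → ℕ by: g(j) is the least j' with j < j' ≤ m and v_B(j') > v_B(j) if such j' exists, and g(j) = m otherwise. Then for every j with 1 ≤ j ≤ m, iterating g at most (log_B m) + 1 times starting from j yields exactly m, where log_B m denotes Nat.log B m. (This is the traversal-time bound for the first skip-list strategy: each node on level i points to the next node on level at least i+1, or to the tail, so the tail is reached after O(log_B m) pointer traversals since the level strictly increases at each step and levels are bounded by log_B m.) -/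
/-- Traversal-time bound for the first skip-list strategy: following pointers to the next
position of strictly higher level (or the tail), the tail `m` is reached in at most
`⌊log_B m⌋ + 1` traversals. -/
theorem skip_list_traversal_fast (B m : ℕ) (hB : 2 ≤ B) (hm : 1 ≤ m) (g : ℕ → ℕ)
    (hg1 : ∀ j, (∃ j', j < j' ∧ j' ≤ m ∧ padicValNat B j < padicValNat B j') →
      j < g j ∧ g j ≤ m ∧ padicValNat B j < padicValNat B (g j) ∧
        ∀ j', j < j' → j' < g j → padicValNat B j' ≤ padicValNat B j)
    (hg2 : ∀ j, (¬ ∃ j', j < j' ∧ j' ≤ m ∧ padicValNat B j < padicValNat B j') → g j = m) :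
    ∀ j, 1 ≤ j → j ≤ m → g^[Nat.log B m + 1] j = m := by
  intro j hj1 hjm
  have hgm : g m = m := by
    apply hg2
    rintro ⟨j', h1, h2, _⟩; omega
  have hval : ∀ x, 1 ≤ x → x ≤ m → padicValNat B x ≤ Nat.log B m := by
    intro x hx1 hxm
    have hdvd : B ^ padicValNat B x ∣ x := pow_padicValNat_dvd
    have := Nat.le_of_dvd (by omega) hdvd
    exact Nat.le_log_of_pow_le (by omega) (le_trans this hxm)
  have key : ∀ k, g^[k] j = m ∨
      (1 ≤ g^[k] j ∧ g^[k] j ≤ m ∧ k ≤ padicValNat B (g^[k] j)) := by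
    intro k
    induction k with
    | zero => right; exact ⟨hj1, hjm, Nat.zero_le _⟩
    | succ n ih =>
      rw [Function.iterate_succ_apply']
      rcases ih with h | ⟨h1, h2, h3⟩
      · left; rw [h, hgm]
      · by_cases hex : ∃ j', g^[n] j < j' ∧ j' ≤ m ∧
            padicValNat B (g^[n] j) < padicValNat B j'
        · obtain ⟨hlt, hle, hv, _⟩ := hg1 _ hex
          right; exact ⟨by omega, hle, by omega⟩
        · left; exact hg2 _ hex
  rcases key (Nat.log B m + 1) with h | ⟨h1, h2, h3⟩
  · exact h
  · exact absurd (hval _ h1 h2) (by omega)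
end

section
/- For all natural numbers x, y and k: x / 2^k = y / 2^k if and only if Nat.xor x y < 2^k (where / denotes integer division, i.e. x / 2^k is the right shift of x by k bits). (This is the correctness of the constant-time lowest-common-ancestor computation in a perfect binary tree used in the 2-d range reporting query algorithm: the ancestors at height k of leaves x and y coincide exactly when all bits of x XOR y lie below position k, so the LCA height is determined by the highest set bit of x XOR y.) -/
lemma xor_shiftRight (x y k : ℕ) : (x ^^^ y) >>> k = x >>> k ^^^ y >>> k := by
  apply Nat.eq_of_testBit_eq
  intro i
  simp [Nat.testBit_shiftRight, Nat.testBit_xor]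

/-- Correctness of the constant-time LCA computation in a perfect binary tree: the ancestors
at height `k` of leaves `x` and `y` coincide exactly when `x XOR y < 2^k`. -/
theorem div_pow_eq_iff_xor_lt (x y k : ℕ) :
    x / 2 ^ k = y / 2 ^ k ↔ x ^^^ y < 2 ^ k := by
  rw [← Nat.shiftRight_eq_div_pow, ← Nat.shiftRight_eq_div_pow, ← xor_eq_zero_iff,
    ← xor_shiftRight, Nat.shiftRight_eq_div_pow, Nat.div_eq_zero_iff_lt]
  positivity
end
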